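/- arXiv:2202.00189 — 3 statements merged into one kernel-verified Lean document; each statement's English description precedes it below -/
import Mathlib

section
/- For natural numbers m, ℓ₁, ℓ₂, the product of falling factorials satisfies m^{\underline{ℓ₁}} · m^{\underline{ℓ₂}} = Σ_{k=0}^{min{ℓ₁,ℓ₂}} C(ℓ₁,k)·C(ℓ₂,k)·k! · m^{\underline{ℓ₁+ℓ₂-k}}. -/
/-!
Write `m = ℓ₁ + (m - ℓ₁)`. The Chu–Vandermonde identity for falling factorials gives
`m^{(ℓ₂)} = ∑ₖ C(ℓ₂,k) ℓ₁^{(k)} (m - ℓ₁)^{(ℓ₂-k)}`, and `m^{(ℓ₁)} (m - ℓ₁)^{(j)} = m^{(ℓ₁+j)}`.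
Finally `ℓ₁^{(k)} = C(ℓ₁,k) k!`, which vanishes for `k > ℓ₁`. Evaluating `descPochhammer` in a
ring rather than in `ℕ` keeps `m - ℓ₁` from being truncated.
-/

open Polynomial Finset

section
variable {R : Type*} [Ring R]

theorem descPochhammer_smeval_mul_smeval_sub (r : R) (a b : ℕ) :
    (descPochhammer ℤ a).smeval r * (descPochhammer ℤ b).smeval (r - a) =
      (descPochhammer ℤ (a + b)).smeval r := by
  rw [← descPochhammer_mul, smeval_mul, smeval_comp, smeval_sub, smeval_X, smeval_natCast,
    npow_one, npow_zero, nsmul_one]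

theorem descPochhammer_smeval_mul_smeval (r : R) (a b : ℕ) :
    (descPochhammer ℤ a).smeval r * (descPochhammer ℤ b).smeval r =
      ∑ k ∈ range (b + 1),
        ((b.choose k * a.descFactorial k : ℕ) : R) * (descPochhammer ℤ (a + b - k)).smeval r := by
  have vandermonde := Ring.descPochhammer_smeval_add b (Nat.cast_commute a (r - a))
  rw [add_sub_cancel] at vandermonde
  rw [vandermonde, mul_sum, Nat.sum_antidiagonal_eq_sum_range_succ
    (fun i j => (descPochhammer ℤ a).smeval r * ((b.choose i : R) *
      ((descPochhammer ℤ i).smeval (a : R) * (descPochhammer ℤ j).smeval (r - a))))]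
  refine sum_congr rfl fun k hk => ?_
  have hkb : a + b - k = a + (b - k) := by have := mem_range.1 hk; omega
  rw [descPochhammer_smeval_eq_descFactorial, hkb, ← descPochhammer_smeval_mul_smeval_sub,
    ← mul_assoc (b.choose k : R), ← Nat.cast_mul]
  exact ((Nat.cast_commute (α := R) _ _).left_comm _).symm

end

theorem descFactorial_mul_descFactorial (m ℓ₁ ℓ₂ : ℕ) :
    Nat.descFactorial m ℓ₁ * Nat.descFactorial m ℓ₂ =
      ∑ k ∈ Finset.range (min ℓ₁ ℓ₂ + 1),
        Nat.choose ℓ₁ k * Nat.choose ℓ₂ k * Nat.factorial k *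
          Nat.descFactorial m (ℓ₁ + ℓ₂ - k) := by
  have h := descPochhammer_smeval_mul_smeval (m : ℤ) ℓ₁ ℓ₂
  simp only [descPochhammer_smeval_eq_descFactorial] at h
  have hsum : m.descFactorial ℓ₁ * m.descFactorial ℓ₂ = ∑ k ∈ range (ℓ₂ + 1),
      ℓ₂.choose k * ℓ₁.descFactorial k * m.descFactorial (ℓ₁ + ℓ₂ - k) := by
    exact_mod_cast h
  rw [hsum, ← sum_subset (range_subset_range.2 (by omega : min ℓ₁ ℓ₂ + 1 ≤ ℓ₂ + 1))]
  · refine sum_congr rfl fun k _ => ?_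
    rw [Nat.descFactorial_eq_factorial_mul_choose]
    ring
  · intro k hk₂ hk
    rw [mem_range] at hk₂ hk
    rw [Nat.descFactorial_eq_zero_iff_lt.2 (by omega : ℓ₁ < k)]
    simp
end

section
/- Let X be an N-dimensional Gaussian random vector with mean zero and covariance matrix C. If N is odd then E[X₁⋯X_N] = 0, and if N is even then E[X₁⋯X_N] = Σ_{P ∈ ℘_N²} Π_{{i,j} ∈ P} C_{ij}, where ℘_N² is the set of all partitions of {1,…,N} into unordered pairs. -/
open Matrix MeasureTheory
open scoped Classical

/-- Density of the `N`-dimensional normal distribution with mean `μ` and covariance `C`. -/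
noncomputable def gaussPdf {N : ℕ} (μ : Fin N → ℝ) (C : Matrix (Fin N) (Fin N) ℝ)
    (x : Fin N → ℝ) : ℝ :=
  (2 * Real.pi) ^ (-(N : ℝ) / 2) * C.det ^ (-(1 : ℝ) / 2) *
    Real.exp (-(1 / 2) * ((x - μ) ⬝ᵥ (C⁻¹ *ᵥ (x - μ))))

/-- The `N`-dimensional Gaussian measure with mean `μ` and covariance `C`. -/
noncomputable def gaussMeasure {N : ℕ} (μ : Fin N → ℝ) (C : Matrix (Fin N) (Fin N) ℝ) :
    Measure (Fin N → ℝ) :=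
  volume.withDensity fun x => ENNReal.ofReal (gaussPdf μ C x)

/-- `P` is a partition of `{1,…,N}` into unordered pairs, encoded as a finite set of
ordered pairs `(i,j)` with `i < j`, each index belonging to exactly one pair. -/
def IsPairPartition {N : ℕ} (P : Finset (Fin N × Fin N)) : Prop :=
  (∀ p ∈ P, p.1 < p.2) ∧ ∀ i : Fin N, ∃! p, p ∈ P ∧ (i = p.1 ∨ i = p.2)

/-!
Write `C = A Aᵀ` with `A` invertible. The substitution `x = A y` turns the Gaussian with
covariance `C` into the standard one, and `∏ᵢ (A y)ᵢ = ∑_f (∏ᵢ A i (f i)) ∏ⱼ y_j ^ |f⁻¹ j|`.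
Under the standard Gaussian the coordinates are independent, and `E[t ^ n]` is `(n - 1)‼` for
even `n` and `0` for odd `n` (integration by parts gives `E[t ^ (n + 2)] = (n + 1) E[t ^ n]`),
which is the number of pair partitions of an `n`-element set (pair its least element with one of
the `n - 1` others). So the term of `f` counts the pair partitions of `{1, …, N}` whose pairs lie
in fibres of `f`. Exchanging the two sums, the maps `f` that are constant on the pairs of a fixed
partition `P` contribute `∏_{(i, j) ∈ P} ∑ₖ A i k A j k = ∏_{(i, j) ∈ P} C i j`.
-/

open Finset Real ProbabilityTheory
open scoped Nat

section PairPartition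

variable {α : Type*} [LinearOrder α]

def IsPairPartitionOn (s : Finset α) (P : Finset (α × α)) : Prop :=
  (∀ p ∈ P, p.1 < p.2 ∧ p.1 ∈ s ∧ p.2 ∈ s) ∧ ∀ i ∈ s, ∃! p, p ∈ P ∧ (i = p.1 ∨ i = p.2)

noncomputable def pairPartitionsOn (s : Finset α) : Finset (Finset (α × α)) :=
  (s ×ˢ s).powerset.filter (IsPairPartitionOn s)

namespace IsPairPartitionOn

variable {s : Finset α} {P : Finset (α × α)}

lemma mem_of_mem (h : IsPairPartitionOn s P) {p : α × α} (hp : p ∈ P) {i : α}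
    (hi : i = p.1 ∨ i = p.2) : i ∈ s := by
  rcases hi with rfl | rfl
  exacts [(h.1 p hp).2.1, (h.1 p hp).2.2]

lemma eq_of_mem (h : IsPairPartitionOn s P) {p q : α × α} {i : α} (hp : p ∈ P) (hq : q ∈ P)
    (hip : i = p.1 ∨ i = p.2) (hiq : i = q.1 ∨ i = q.2) : p = q :=
  (h.2 i (h.mem_of_mem hp hip)).unique ⟨hp, hip⟩ ⟨hq, hiq⟩

lemma erase (h : IsPairPartitionOn s P) {a b : α} (hab : (a, b) ∈ P) :
    IsPairPartitionOn ((s.erase a).erase b) (P.erase (a, b)) := by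
  refine ⟨fun p hp => ?_, fun i hi => ?_⟩
  · obtain ⟨hne, hpP⟩ := mem_erase.mp hp
    have hpa (hi : a = p.1 ∨ a = p.2) : False := hne (h.eq_of_mem hpP hab hi (.inl rfl))
    have hpb (hi : b = p.1 ∨ b = p.2) : False := hne (h.eq_of_mem hpP hab hi (.inr rfl))
    obtain ⟨hlt, h1, h2⟩ := h.1 p hpP
    simp only [mem_erase]
    exact ⟨hlt, ⟨fun e => hpb (.inl e.symm), fun e => hpa (.inl e.symm), h1⟩,
      ⟨fun e => hpb (.inr e.symm), fun e => hpa (.inr e.symm), h2⟩⟩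
  · obtain ⟨hib, hia, his⟩ : i ≠ b ∧ i ≠ a ∧ i ∈ s := by simpa using hi
    obtain ⟨p, ⟨hpP, hip⟩, huniq⟩ := h.2 i his
    refine ⟨p, ⟨mem_erase.mpr ⟨?_, hpP⟩, hip⟩,
      fun q ⟨hq, hiq⟩ => huniq q ⟨mem_of_mem_erase hq, hiq⟩⟩
    rintro rfl
    exact hip.elim hia hib

lemma insert {a b : α} (h : IsPairPartitionOn ((s.erase a).erase b) P) (hab : a < b)
    (ha : a ∈ s) (hb : b ∈ s) : IsPairPartitionOn s (insert (a, b) P) := by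
  have hP {q : α × α} (hq : q ∈ P) {i : α} (hi : i = q.1 ∨ i = q.2) : i ≠ b ∧ i ≠ a ∧ i ∈ s := by
    simpa using h.mem_of_mem hq hi
  refine ⟨fun p hp => ?_, fun i hi => ?_⟩
  · rcases mem_insert.mp hp with rfl | hpP
    · exact ⟨hab, ha, hb⟩
    · exact ⟨(h.1 p hpP).1, (hP hpP (.inl rfl)).2.2, (hP hpP (.inr rfl)).2.2⟩
  by_cases hiab : i = a ∨ i = b
  · refine ⟨(a, b), ⟨mem_insert_self _ _, hiab⟩, fun q ⟨hq, hiq⟩ => ?_⟩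
    rcases mem_insert.mp hq with rfl | hqP
    · rfl
    · exact (hiab.elim (hP hqP hiq).2.1 (hP hqP hiq).1).elim
  · rw [not_or] at hiab
    obtain ⟨p, ⟨hpP, hip⟩, huniq⟩ := h.2 i (by simp [hiab.1, hiab.2, hi])
    refine ⟨p, ⟨mem_insert_of_mem hpP, hip⟩, fun q ⟨hq, hiq⟩ => ?_⟩
    rcases mem_insert.mp hq with rfl | hqP
    · exact (hiq.elim hiab.1 hiab.2).elim
    · exact huniq q ⟨hqP, hiq⟩

lemma exists_mem_min' (h : IsPairPartitionOn s P) (hs : s.Nonempty) :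
    ∃ b, (s.min' hs, b) ∈ P := by
  obtain ⟨p, ⟨hpP, hp⟩, -⟩ := h.2 _ (s.min'_mem hs)
  obtain ⟨hlt, h1, -⟩ := h.1 p hpP
  rcases hp with hp | hp
  · exact ⟨p.2, by rwa [hp]⟩
  · exact absurd (hp ▸ hlt) (not_lt.mpr (s.min'_le _ h1))

lemma prod_eq {M : Type*} [CommMonoid M] (h : IsPairPartitionOn s P) (g : α → M) :
    ∏ i ∈ s, g i = ∏ p ∈ P, g p.1 * g p.2 := by
  have hcover : P.biUnion (fun p => {p.1, p.2}) = s := by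
    ext i
    simp only [mem_biUnion, mem_insert, mem_singleton]
    exact ⟨fun ⟨p, hp, hi⟩ => h.mem_of_mem hp hi, fun hi => (h.2 i hi).exists⟩
  rw [← hcover, prod_biUnion]
  · exact prod_congr rfl fun p hp => prod_pair (h.1 p hp).1.ne
  · intro p hp q hq hpq
    simp only [Function.onFun, disjoint_left, mem_insert, mem_singleton]
    exact fun i hip hiq => hpq (h.eq_of_mem hp hq hip hiq)

variable {κ : Type*} {f : α → κ}

lemma filter_fiber (h : IsPairPartitionOn s P) (hf : ∀ p ∈ P, f p.1 = f p.2) (j : κ) :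
    IsPairPartitionOn (s.filter (f · = j)) (P.filter (f ·.1 = j)) := by
  refine ⟨fun p hp => ?_, fun i hi => ?_⟩
  · obtain ⟨hpP, hpj⟩ := mem_filter.mp hp
    obtain ⟨hlt, h1, h2⟩ := h.1 p hpP
    exact ⟨hlt, mem_filter.mpr ⟨h1, hpj⟩, mem_filter.mpr ⟨h2, hf p hpP ▸ hpj⟩⟩
  · obtain ⟨his, hij⟩ := mem_filter.mp hi
    obtain ⟨p, ⟨hpP, hip⟩, huniq⟩ := h.2 i his
    have hpj : f p.1 = j := by rcases hip with rfl | rfl; exacts [hij, (hf p hpP).trans hij]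
    exact ⟨p, ⟨mem_filter.mpr ⟨hpP, hpj⟩, hip⟩,
      fun q ⟨hq, hiq⟩ => huniq q ⟨(mem_filter.mp hq).1, hiq⟩⟩

lemma biUnion_fiber [Fintype κ] {Q : κ → Finset (α × α)}
    (hQ : ∀ j, IsPairPartitionOn (s.filter (f · = j)) (Q j)) :
    IsPairPartitionOn s (univ.biUnion Q) := by
  have hfib {j : κ} {p : α × α} (hp : p ∈ Q j) {i : α} (hi : i = p.1 ∨ i = p.2) :
      i ∈ s ∧ f i = j :=
    mem_filter.mp ((hQ j).mem_of_mem hp hi)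
  refine ⟨fun p hp => ?_, fun i hi => ?_⟩
  · obtain ⟨j, -, hpj⟩ := mem_biUnion.mp hp
    exact ⟨((hQ j).1 p hpj).1, (hfib hpj (.inl rfl)).1, (hfib hpj (.inr rfl)).1⟩
  · obtain ⟨p, ⟨hpQ, hip⟩, huniq⟩ := (hQ (f i)).2 i (mem_filter.mpr ⟨hi, rfl⟩)
    refine ⟨p, ⟨mem_biUnion.mpr ⟨f i, mem_univ _, hpQ⟩, hip⟩, fun q ⟨hq, hiq⟩ => ?_⟩
    obtain ⟨j, -, hqj⟩ := mem_biUnion.mp hq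
    obtain rfl := (hfib hqj hiq).2
    exact huniq q ⟨hqj, hiq⟩

end IsPairPartitionOn

lemma mem_pairPartitionsOn {s : Finset α} {P : Finset (α × α)} :
    P ∈ pairPartitionsOn s ↔ IsPairPartitionOn s P := by
  simp only [pairPartitionsOn, mem_filter, mem_powerset, and_iff_right_iff_imp]
  exact fun h p hp => mem_product.mpr ⟨h.mem_of_mem hp (.inl rfl), h.mem_of_mem hp (.inr rfl)⟩

lemma pairPartitionsOn_eq_biUnion {s : Finset α} (hs : s.Nonempty) :
    pairPartitionsOn s = (s.erase (s.min' hs)).biUnion fun b =>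
      (pairPartitionsOn ((s.erase (s.min' hs)).erase b)).image (insert (s.min' hs, b)) := by
  ext P
  simp only [mem_biUnion, mem_image, mem_pairPartitionsOn]
  constructor
  · intro hP
    obtain ⟨b, hab⟩ := hP.exists_mem_min' hs
    exact ⟨b, mem_erase.mpr ⟨(hP.1 _ hab).1.ne', (hP.1 _ hab).2.2⟩, P.erase _, hP.erase hab,
      insert_erase hab⟩
  · rintro ⟨b, hb, P', hP', rfl⟩
    exact hP'.insert (s.min'_lt_of_mem_erase_min' hs hb) (s.min'_mem hs) (mem_of_mem_erase hb)

lemma card_pairPartitionsOn_eq_sum {s : Finset α} (hs : s.Nonempty) :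
    #(pairPartitionsOn s) =
      ∑ b ∈ s.erase (s.min' hs), #(pairPartitionsOn ((s.erase (s.min' hs)).erase b)) := by
  have hnotMem {b c : α} {P : Finset (α × α)}
      (hP : P ∈ pairPartitionsOn ((s.erase (s.min' hs)).erase b)) : (s.min' hs, c) ∉ P :=
    fun h => by simpa using (mem_pairPartitionsOn.mp hP).mem_of_mem h (.inl rfl)
  rw [pairPartitionsOn_eq_biUnion hs, card_biUnion]
  · refine sum_congr rfl fun b _ => card_image_of_injOn fun P hP Q hQ hPQ => ?_
    simpa [erase_insert (hnotMem hP), erase_insert (hnotMem hQ)] using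
      congrArg (·.erase (s.min' hs, b)) hPQ
  · intro b _ b' _ hbb'
    simp only [Function.onFun, disjoint_left, mem_image]
    rintro _ ⟨P, hP, rfl⟩ ⟨P', -, hPP'⟩
    rcases mem_insert.mp (hPP' ▸ mem_insert_self _ _ : (s.min' hs, b') ∈ insert (s.min' hs, b) P)
      with h | h
    · exact hbb' (Prod.ext_iff.mp h).2.symm
    · exact hnotMem hP h

theorem card_pairPartitionsOn (s : Finset α) :
    #(pairPartitionsOn s) = if Even #s then (#s - 1)‼ else 0 := by
  induction s using Finset.strongInduction with
  | _ s ih =>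
  rcases s.eq_empty_or_nonempty with rfl | hs
  · have : IsPairPartitionOn (∅ : Finset α) ∅ := ⟨by simp, by simp⟩
    simp [pairPartitionsOn, filter_singleton, this]
  have ha := s.min'_mem hs
  rw [card_pairPartitionsOn_eq_sum hs, sum_congr rfl fun b hb => by
    rw [ih _ ((erase_subset _ _).trans_ssubset (erase_ssubset ha)), card_erase_of_mem hb,
      card_erase_of_mem ha], sum_const, card_erase_of_mem ha, smul_eq_mul]
  obtain ⟨n, hn⟩ : ∃ n, #s = n + 1 := ⟨#s - 1, by have := hs.card_pos; omega⟩
  rcases n with _ | n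
  · simp [hn]
  · by_cases he : Even n
    · simp [hn, he, parity_simps, Nat.doubleFactorial_add_one]
    · simp [hn, he, parity_simps]

lemma pairPartitionsOn_eq_empty_of_odd {s : Finset α} (hs : Odd #s) : pairPartitionsOn s = ∅ := by
  rw [← card_eq_zero, card_pairPartitionsOn, if_neg (Nat.not_even_iff_odd.mpr hs)]

lemma card_filter_pairPartitionsOn_eq_prod_fiber {κ : Type*} [Fintype κ] (s : Finset α)
    (f : α → κ) :
    #((pairPartitionsOn s).filter fun P => ∀ p ∈ P, f p.1 = f p.2) =
      ∏ j, #(pairPartitionsOn (s.filter (f · = j))) := by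
  rw [← Fintype.card_piFinset]
  refine card_nbij' (fun P j => P.filter (f ·.1 = j)) (fun Q => univ.biUnion Q) ?_ ?_ ?_ ?_
  · intro P hP
    obtain ⟨hP, hf⟩ := mem_filter.mp hP
    simpa [Fintype.mem_piFinset, mem_pairPartitionsOn] using
      (mem_pairPartitionsOn.mp hP).filter_fiber hf
  · intro Q hQ
    simp only [mem_coe, Fintype.mem_piFinset, mem_pairPartitionsOn] at hQ
    refine mem_filter.mpr ⟨mem_pairPartitionsOn.mpr (IsPairPartitionOn.biUnion_fiber hQ), ?_⟩
    intro p hp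
    obtain ⟨j, -, hpj⟩ := mem_biUnion.mp hp
    exact (mem_filter.mp ((hQ j).mem_of_mem hpj (.inl rfl))).2.trans
      (mem_filter.mp ((hQ j).mem_of_mem hpj (.inr rfl))).2.symm
  · intro P _
    exact biUnion_filter_eq_of_maps_to fun _ _ => mem_univ _
  · intro Q hQ
    simp only [mem_coe, Fintype.mem_piFinset, mem_pairPartitionsOn] at hQ
    funext j
    ext p
    simp only [mem_filter, mem_biUnion, mem_univ, true_and]
    constructor
    · rintro ⟨⟨j', hpj'⟩, rfl⟩
      rwa [(mem_filter.mp ((hQ j').mem_of_mem hpj' (.inl rfl))).2]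
    · exact fun hp => ⟨⟨j, hp⟩, (mem_filter.mp ((hQ j).mem_of_mem hp (.inl rfl))).2⟩

lemma IsPairPartitionOn.sum_prod_apply_eq_prod_sum_mul {R κ : Type*} [CommSemiring R]
    [Fintype α] [Fintype κ] {P : Finset (α × α)} (h : IsPairPartitionOn univ P) (A : Matrix α κ R) :
    ∑ f ∈ univ.filter (fun f : α → κ => ∀ p ∈ P, f p.1 = f p.2), ∏ i, A i (f i) =
      ∏ p ∈ P, ∑ k, A p.1 k * A p.2 k := by
  choose pair hpair using fun i => (h.2 i (mem_univ i)).exists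
  have hpair_eq {p : α × α} (hp : p ∈ P) {i : α} (hi : i = p.1 ∨ i = p.2) : pair i = p :=
    h.eq_of_mem (hpair i).1 hp (hpair i).2 hi
  rw [← prod_coe_sort, prod_univ_sum, Fintype.piFinset_univ]
  refine sum_nbij' (fun f p => f p.1.1) (fun g i => g ⟨pair i, (hpair i).1⟩) (by simp) ?_ ?_ ?_ ?_
  · intro g _
    simp only [mem_filter, mem_univ, true_and]
    exact fun p hp =>
      congrArg g (Subtype.ext ((hpair_eq hp (.inl rfl)).trans (hpair_eq hp (.inr rfl)).symm))
  · intro f hf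
    simp only [mem_filter, mem_univ, true_and] at hf
    funext i
    rcases (hpair i).2 with hi | hi
    · exact congrArg f hi.symm
    · exact (hf _ (hpair i).1).trans (congrArg f hi.symm)
  · intro g _
    funext p
    simp only [hpair_eq p.2 (.inl rfl)]
  · intro f hf
    simp only [mem_filter, mem_univ, true_and] at hf
    rw [h.prod_eq, ← prod_coe_sort]
    exact prod_congr rfl fun p _ => by dsimp only; rw [hf p p.2]

theorem sum_prod_mul_prod_card_pairPartitionsOn {R κ : Type*} [CommSemiring R] [Fintype α]
    [Fintype κ] (A : Matrix α κ R) :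
    ∑ f : α → κ, (∏ i, A i (f i)) * ∏ j, (#(pairPartitionsOn (univ.filter (f · = j))) : R) =
      ∑ P ∈ pairPartitionsOn univ, ∏ p ∈ P, (A * Aᵀ) p.1 p.2 := by
  calc _ = ∑ f : α → κ, ∑ P ∈ (pairPartitionsOn univ).filter (fun P => ∀ p ∈ P, f p.1 = f p.2),
        ∏ i, A i (f i) := by
        refine sum_congr rfl fun f _ => ?_
        rw [sum_const, nsmul_eq_mul, ← Nat.cast_prod, ← card_filter_pairPartitionsOn_eq_prod_fiber,
          mul_comm]
        -- the two filters differ in their `Decidable` instances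
        congr
    _ = ∑ P ∈ pairPartitionsOn univ, ∑ f ∈ univ.filter (fun f : α → κ => ∀ p ∈ P, f p.1 = f p.2),
        ∏ i, A i (f i) := sum_comm' fun _ _ => by simp [and_comm]
    _ = _ := sum_congr rfl fun P hP => by
        rw [(mem_pairPartitionsOn.mp hP).sum_prod_apply_eq_prod_sum_mul]
        simp [mul_apply]

end PairPartition

lemma gaussianPDFReal_zero_one (x : ℝ) :
    gaussianPDFReal 0 1 x = (√(2 * π))⁻¹ * exp (-(1 / 2) * x ^ 2) := by
  simp only [gaussianPDFReal, NNReal.coe_one, mul_one, sub_zero]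
  ring_nf

lemma hasDerivAt_gaussianPDFReal_zero_one (x : ℝ) :
    HasDerivAt (gaussianPDFReal 0 1) (-x * gaussianPDFReal 0 1 x) x := by
  simp_rw [funext gaussianPDFReal_zero_one]
  refine (((hasDerivAt_pow 2 x).const_mul (-(1 / 2))).exp.const_mul (√(2 * π))⁻¹).congr_deriv ?_
  push_cast
  ring

lemma integrable_gaussianPDFReal_zero_one_mul_pow (n : ℕ) :
    Integrable fun x => gaussianPDFReal 0 1 x * x ^ n := by
  have h := integrable_rpow_mul_exp_neg_mul_sq (b := 1 / 2) (by norm_num)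
    (s := n) (by linarith [(Nat.cast_nonneg n : (0 : ℝ) ≤ n)])
  simp_rw [Real.rpow_natCast] at h
  simpa [gaussianPDFReal_zero_one, mul_comm, mul_left_comm, mul_assoc] using
    h.const_mul (√(2 * π))⁻¹

lemma integral_pow_add_two_gaussianReal (n : ℕ) :
    ∫ x, x ^ (n + 2) ∂gaussianReal 0 1 = (n + 1) * ∫ x, x ^ n ∂gaussianReal 0 1 := by
  simp only [integral_gaussianReal_eq_integral_smul one_ne_zero, smul_eq_mul]
  have hderiv (x : ℝ) : HasDerivAt (fun x => x ^ (n + 1) * gaussianPDFReal 0 1 x)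
      ((n + 1) * (gaussianPDFReal 0 1 x * x ^ n) - gaussianPDFReal 0 1 x * x ^ (n + 2)) x := by
    refine ((hasDerivAt_pow (n + 1) x).mul (hasDerivAt_gaussianPDFReal_zero_one x)).congr_deriv ?_
    push_cast
    ring
  have hint := integrable_gaussianPDFReal_zero_one_mul_pow
  have h := integral_eq_zero_of_hasDerivAt_of_integrable hderiv
    (((hint n).const_mul _).sub (hint (n + 2))) (by simpa [mul_comm] using hint (n + 1))
  rw [integral_sub ((hint n).const_mul _) (hint (n + 2)), integral_const_mul] at h
  linarith

theorem integral_pow_gaussianReal (n : ℕ) :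
    ∫ x, x ^ n ∂gaussianReal 0 1 = if Even n then ((n - 1)‼ : ℝ) else 0 := by
  induction n using Nat.twoStepInduction with
  | zero => simp
  | one => simp [integral_id_gaussianReal]
  | more n ih _ =>
    rw [integral_pow_add_two_gaussianReal, ih]
    by_cases hn : Even n
    · simp [hn, Nat.doubleFactorial_add_one, parity_simps]
    · simp [hn, parity_simps]

lemma integral_pow_card_gaussianReal {α : Type*} [LinearOrder α] (s : Finset α) :
    ∫ x, x ^ #s ∂gaussianReal 0 1 = #(pairPartitionsOn s) := by
  rw [integral_pow_gaussianReal, card_pairPartitionsOn]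
  split_ifs <;> simp

lemma Matrix.prod_mulVec_eq_sum {R ι κ : Type*} [CommSemiring R] [Fintype ι] [DecidableEq ι]
    [Fintype κ] (A : Matrix ι κ R) (y : κ → R) :
    ∏ i, (A *ᵥ y) i = ∑ f : ι → κ, (∏ i, A i (f i)) * ∏ j, y j ^ #{i | f i = j} := by
  simp only [mulVec, dotProduct, prod_univ_sum, Fintype.piFinset_univ, prod_mul_distrib]
  refine sum_congr rfl fun f _ => ?_
  rw [← prod_fiberwise' univ f y]
  simp

open scoped MatrixOrder in
lemma Matrix.PosDef.exists_eq_mul_transpose {n : Type*} [Fintype n] [DecidableEq n]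
    {C : Matrix n n ℝ} (hC : C.PosDef) : ∃ A : Matrix n n ℝ, A.det ≠ 0 ∧ C = A * Aᵀ := by
  obtain ⟨A, hA, rfl⟩ :=
    CStarAlgebra.isStrictlyPositive_iff_eq_mul_star_self.mp hC.isStrictlyPositive
  exact ⟨A, ((isUnit_iff_isUnit_det A).mp hA).ne_zero, by simp [star_eq_conjTranspose]⟩

lemma integral_comp_mulVec {ι : Type*} [Fintype ι] [DecidableEq ι] {E : Type*}
    [NormedAddCommGroup E] [NormedSpace ℝ E] {A : Matrix ι ι ℝ} (hA : A.det ≠ 0)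
    (f : (ι → ℝ) → E) : ∫ y, f (A *ᵥ y) = |A.det|⁻¹ • ∫ x, f x := by
  have hemb : MeasurableEmbedding (toLin' A) :=
    (LinearMap.isClosedEmbedding_of_injective (LinearMap.ker_eq_bot.mpr
      (mulVec_injective_of_det_ne_zero hA))).measurableEmbedding
  have h := hemb.integral_map (μ := volume) f
  rw [Real.map_matrix_volume_pi_eq_smul_volume_pi hA, integral_smul_measure,
    ENNReal.toReal_ofReal (abs_nonneg _), abs_inv] at h
  simpa only [toLin'_apply] using h.symm

section GaussMeasure

variable {N : ℕ}

lemma continuous_gaussPdf (μ : Fin N → ℝ) (C : Matrix (Fin N) (Fin N) ℝ) :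
    Continuous (gaussPdf μ C) := by
  unfold gaussPdf
  fun_prop

lemma gaussPdf_nonneg (μ : Fin N → ℝ) {C : Matrix (Fin N) (Fin N) ℝ} (hC : 0 ≤ C.det)
    (x : Fin N → ℝ) : 0 ≤ gaussPdf μ C x := by
  unfold gaussPdf
  positivity

lemma integral_gaussMeasure {E : Type*} [NormedAddCommGroup E] [NormedSpace ℝ E]
    (μ : Fin N → ℝ) {C : Matrix (Fin N) (Fin N) ℝ} (hC : 0 ≤ C.det) (g : (Fin N → ℝ) → E) :
    ∫ x, g x ∂gaussMeasure μ C = ∫ x, gaussPdf μ C x • g x := by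
  rw [gaussMeasure, integral_withDensity_eq_integral_toReal_smul
    (continuous_gaussPdf μ C).measurable.ennreal_ofReal
    (ae_of_all _ fun _ => ENNReal.ofReal_lt_top)]
  simp_rw [ENNReal.toReal_ofReal (gaussPdf_nonneg μ hC _)]

lemma gaussPdf_zero_one (y : Fin N → ℝ) : gaussPdf 0 1 y = ∏ j, gaussianPDFReal 0 1 (y j) := by
  simp only [gaussPdf, sub_zero, det_one, Real.one_rpow, mul_one, inv_one, one_mulVec,
    gaussianPDFReal_zero_one, prod_mul_distrib, prod_const, card_univ, Fintype.card_fin,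
    ← Real.exp_sum, dotProduct, mul_sum, sq]
  rw [Real.sqrt_eq_rpow, ← Real.rpow_neg (by positivity), ← Real.rpow_mul_natCast (by positivity)]
  ring_nf

lemma gaussPdf_mul_transpose_mulVec {A : Matrix (Fin N) (Fin N) ℝ} (hA : A.det ≠ 0)
    (y : Fin N → ℝ) : |A.det| * gaussPdf 0 (A * Aᵀ) (A *ᵥ y) = gaussPdf 0 1 y := by
  have hquad : (A *ᵥ y) ⬝ᵥ ((A * Aᵀ)⁻¹ *ᵥ (A *ᵥ y)) = y ⬝ᵥ y := by
    rw [Matrix.mul_inv_rev, mulVec_mulVec, mul_assoc, nonsing_inv_mul _ hA.isUnit, mul_one,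
      dotProduct_mulVec, ← vecMul_transpose, vecMul_vecMul,
      mul_nonsing_inv _ (by simpa using hA.isUnit), vecMul_one]
  have hdet : |A.det| * (A * Aᵀ).det ^ (-(1 : ℝ) / 2) = 1 := by
    rw [det_mul, det_transpose, ← sq, neg_div, Real.rpow_neg (sq_nonneg _), ← Real.sqrt_eq_rpow,
      Real.sqrt_sq_eq_abs, mul_inv_cancel₀ (abs_ne_zero.mpr hA)]
  simp only [gaussPdf, sub_zero, hquad, det_one, Real.one_rpow, inv_one, one_mulVec]
  linear_combination (2 * π) ^ (-(N : ℝ) / 2) * rexp (-(1 / 2) * (y ⬝ᵥ y)) * hdet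

theorem integral_gaussMeasure_mul_transpose {E : Type*} [NormedAddCommGroup E]
    [NormedSpace ℝ E] {A : Matrix (Fin N) (Fin N) ℝ} (hA : A.det ≠ 0) (g : (Fin N → ℝ) → E) :
    ∫ x, g x ∂gaussMeasure 0 (A * Aᵀ) = ∫ y, gaussPdf 0 1 y • g (A *ᵥ y) := by
  have hdet : 0 ≤ (A * Aᵀ).det := by simpa [det_mul] using mul_self_nonneg A.det
  calc ∫ x, g x ∂gaussMeasure 0 (A * Aᵀ)
      = |A.det| • ∫ y, gaussPdf 0 (A * Aᵀ) (A *ᵥ y) • g (A *ᵥ y) := by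
        rw [integral_gaussMeasure 0 hdet, integral_comp_mulVec hA (fun x => gaussPdf 0 _ x • g x),
          smul_inv_smul₀ (abs_ne_zero.mpr hA)]
    _ = ∫ y, gaussPdf 0 1 y • g (A *ᵥ y) := by
        simp_rw [← integral_smul, smul_smul, gaussPdf_mul_transpose_mulVec hA]

lemma integrable_gaussPdf_zero_one_mul_prod_pow (c : Fin N → ℕ) :
    Integrable fun y : Fin N → ℝ => gaussPdf 0 1 y * ∏ j, y j ^ c j := by
  simp_rw [gaussPdf_zero_one, ← prod_mul_distrib]
  exact Integrable.fintype_prod (f := fun j t => gaussianPDFReal 0 1 t * t ^ c j)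
    fun j => integrable_gaussianPDFReal_zero_one_mul_pow (c j)

lemma integral_gaussPdf_zero_one_mul_prod_pow (c : Fin N → ℕ) :
    ∫ y, gaussPdf 0 1 y * ∏ j, y j ^ c j = ∏ j, ∫ t, t ^ c j ∂gaussianReal 0 1 := by
  simp_rw [gaussPdf_zero_one, ← prod_mul_distrib,
    integral_gaussianReal_eq_integral_smul one_ne_zero, smul_eq_mul]
  exact integral_fintype_prod_volume_eq_prod (fun j t => gaussianPDFReal 0 1 t * t ^ c j)

theorem integral_prod_gaussMeasure_mul_transpose {A : Matrix (Fin N) (Fin N) ℝ}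
    (hA : A.det ≠ 0) :
    ∫ x, ∏ i, x i ∂gaussMeasure 0 (A * Aᵀ) =
      ∑ P ∈ pairPartitionsOn univ, ∏ p ∈ P, (A * Aᵀ) p.1 p.2 := by
  rw [integral_gaussMeasure_mul_transpose hA, ← sum_prod_mul_prod_card_pairPartitionsOn]
  simp_rw [smul_eq_mul, prod_mulVec_eq_sum, mul_sum, mul_left_comm (gaussPdf 0 1 _)]
  rw [integral_finsetSum _ fun f _ => (integrable_gaussPdf_zero_one_mul_prod_pow _).const_mul _]
  refine sum_congr rfl fun f _ => ?_
  rw [integral_const_mul, integral_gaussPdf_zero_one_mul_prod_pow]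
  simp_rw [integral_pow_card_gaussianReal]

end GaussMeasure

lemma filter_isPairPartition_eq_pairPartitionsOn_univ (N : ℕ) :
    univ.filter (fun P : Finset (Fin N × Fin N) => IsPairPartition P) = pairPartitionsOn univ := by
  ext P
  simp [mem_pairPartitionsOn, IsPairPartition, IsPairPartitionOn]

/-- Isserlis (Wick's) theorem. -/
theorem isserlis {N : ℕ} (C : Matrix (Fin N) (Fin N) ℝ) (hC : C.PosDef) :
    ∫ x, (∏ i, x i) ∂(gaussMeasure (0 : Fin N → ℝ) C) =
      if Odd N then 0
      else ∑ P ∈ Finset.univ.filter (fun P : Finset (Fin N × Fin N) => IsPairPartition P),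
        ∏ p ∈ P, C p.1 p.2 := by
  obtain ⟨A, hA, rfl⟩ := hC.exists_eq_mul_transpose
  rw [integral_prod_gaussMeasure_mul_transpose hA, filter_isPairPartition_eq_pairPartitionsOn_univ]
  split_ifs with hN
  · rw [pairPartitionsOn_eq_empty_of_odd (by simpa using hN), sum_empty]
  · rfl
end

section
/- For natural numbers m and ℓ, the falling factorial satisfies (2m)^{\underline{ℓ}} = Σ_{p=⌈ℓ/2⌉}^{min{m,ℓ}} C(ℓ,p;2) · m^{\underline{p}}, where C(ℓ,p;2) are the generalized factorial coefficients with parameter 2, which satisfy C(ℓ, ℓ−k; 2) = 2^{ℓ-k}·H(ℓ,k) with H(ℓ,k) = ℓ!/(2^k k!(ℓ−2k)!). -/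
noncomputable def hc (ℓ k : ℕ) : ℚ :=
  if 2 * k ≤ ℓ then
    (Nat.factorial ℓ : ℚ) / (Nat.factorial k * Nat.factorial (ℓ - 2 * k)) * 2 ^ (ℓ - 2 * k)
  else 0

lemma df_cast (n j : ℕ) :
    (Nat.descFactorial n (j + 1) : ℚ) = ((n : ℚ) - j) * Nat.descFactorial n j := by
  rcases le_or_gt j n with h | h
  · rw [Nat.descFactorial_succ, Nat.cast_mul, Nat.cast_sub h]
  · rw [Nat.descFactorial_eq_zero_iff_lt.2 h,
      Nat.descFactorial_eq_zero_iff_lt.2 (Nat.lt_succ_of_lt h)]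
    simp

lemma hc_zero (ℓ : ℕ) : hc ℓ 0 = 2 ^ ℓ := by
  have h : (Nat.factorial ℓ : ℚ) ≠ 0 := by exact_mod_cast (Nat.factorial_pos ℓ).ne'
  simp [hc, Nat.factorial, div_self h]

lemma hc_big {ℓ k : ℕ} (h : ℓ < 2 * k) : hc ℓ k = 0 := by
  simp [hc, not_le.2 h]

lemma hc_rec (ℓ k : ℕ) :
    hc (ℓ + 1) (k + 1) = 2 * hc ℓ (k + 1) + ((ℓ : ℚ) - 2 * k) * hc ℓ k := by
  rcases lt_or_ge ℓ (2 * k) with h | h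
  · have h1 : ¬ 2 * (k + 1) ≤ ℓ + 1 := by omega
    have h2 : ¬ 2 * (k + 1) ≤ ℓ := by omega
    have h3 : ¬ 2 * k ≤ ℓ := by omega
    simp [hc, h1, h2, h3]
  rcases Nat.lt_or_ge ℓ (2 * k + 2) with h' | h'
  · obtain rfl | rfl : ℓ = 2 * k ∨ ℓ = 2 * k + 1 := by omega
    · have h1 : ¬ 2 * (k + 1) ≤ 2 * k + 1 := by omega
      have h2 : ¬ 2 * (k + 1) ≤ 2 * k := by omega
      simp [hc, h1, h2]
    · have h1 : 2 * (k + 1) ≤ 2 * k + 1 + 1 := by omega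
      have h2 : ¬ 2 * (k + 1) ≤ 2 * k + 1 := by omega
      have h3 : 2 * k ≤ 2 * k + 1 := by omega
      simp only [hc, if_pos h1, if_neg h2, if_pos h3]
      have e1 : 2 * k + 1 + 1 - 2 * (k + 1) = 0 := by omega
      have e2 : 2 * k + 1 - 2 * k = 1 := by omega
      rw [e1, e2]
      have f1 : (Nat.factorial (2 * k + 1 + 1) : ℚ)
          = (2 * k + 2) * Nat.factorial (2 * k + 1) := by
        rw [show 2 * k + 1 + 1 = (2 * k + 1) + 1 from rfl, Nat.factorial_succ]
        push_cast; ring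
      rw [f1, Nat.factorial_succ k]
      have hk : (Nat.factorial k : ℚ) ≠ 0 := by exact_mod_cast (Nat.factorial_pos k).ne'
      have hq : (Nat.factorial (2 * k + 1) : ℚ) ≠ 0 := by
        exact_mod_cast (Nat.factorial_pos _).ne'
      have hk1 : ((k : ℚ) + 1) ≠ 0 := by positivity
      push_cast
      field_simp
      ring
  · obtain ⟨j, rfl⟩ : ∃ j, ℓ = j + (2 * k + 2) := ⟨ℓ - (2 * k + 2), by omega⟩
    have h1 : 2 * (k + 1) ≤ j + (2 * k + 2) + 1 := by omega
    have h2 : 2 * (k + 1) ≤ j + (2 * k + 2) := by omega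
    have h3 : 2 * k ≤ j + (2 * k + 2) := by omega
    simp only [hc, if_pos h1, if_pos h2, if_pos h3]
    have e1 : j + (2 * k + 2) + 1 - 2 * (k + 1) = j + 1 := by omega
    have e2 : j + (2 * k + 2) - 2 * (k + 1) = j := by omega
    have e3 : j + (2 * k + 2) - 2 * k = j + 2 := by omega
    rw [e1, e2, e3]
    have f1 : (Nat.factorial (j + (2 * k + 2) + 1) : ℚ)
        = (j + 2 * k + 3) * Nat.factorial (j + (2 * k + 2)) := by
      rw [Nat.factorial_succ]; push_cast; ring
    have f2 : (Nat.factorial (j + 2) : ℚ) = ((j : ℚ) + 2) * ((j : ℚ) + 1) * Nat.factorial j := by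
      rw [show j + 2 = (j + 1) + 1 from rfl, Nat.factorial_succ, Nat.factorial_succ]
      push_cast; ring
    have f3 : (Nat.factorial (j + 1) : ℚ) = ((j : ℚ) + 1) * Nat.factorial j := by
      rw [Nat.factorial_succ]; push_cast; ring
    have f4 : (Nat.factorial (k + 1) : ℚ) = ((k : ℚ) + 1) * Nat.factorial k := by
      rw [Nat.factorial_succ]; push_cast; ring
    rw [f1, f2, f3, f4]
    have hj : (Nat.factorial j : ℚ) ≠ 0 := by exact_mod_cast (Nat.factorial_pos j).ne'
    have hk : (Nat.factorial k : ℚ) ≠ 0 := by exact_mod_cast (Nat.factorial_pos k).ne'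
    have hF : (Nat.factorial (j + (2 * k + 2)) : ℚ) ≠ 0 := by
      exact_mod_cast (Nat.factorial_pos _).ne'
    have hj1 : ((j : ℚ) + 1) ≠ 0 := by positivity
    have hj2 : ((j : ℚ) + 2) ≠ 0 := by positivity
    have hk1 : ((k : ℚ) + 1) ≠ 0 := by positivity
    push_cast
    field_simp
    ring

lemma key (m ℓ : ℕ) :
    (Nat.descFactorial (2 * m) ℓ : ℚ) =
      ∑ k ∈ Finset.range (ℓ + 1), hc ℓ k * (Nat.descFactorial m (ℓ - k) : ℚ) := by
  induction ℓ with
  | zero => simp [hc_zero]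
  | succ ℓ ih =>
    set f : ℕ → ℚ := fun j => (Nat.descFactorial m j : ℚ) with hf
    have hc_top : hc ℓ (ℓ + 1) = 0 := hc_big (by omega)
    have hB : ∑ k ∈ Finset.range (ℓ + 1), hc ℓ k * f (ℓ + 1 - k)
        = ∑ k ∈ Finset.range (ℓ + 1), hc ℓ (k + 1) * f (ℓ - k) + hc ℓ 0 * f (ℓ + 1) := by
      rw [Finset.sum_range_succ' (fun k => hc ℓ k * f (ℓ + 1 - k)) ℓ,
        Finset.sum_range_succ (fun k => hc ℓ (k + 1) * f (ℓ - k)) ℓ]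
      simp [Nat.succ_sub_succ, hc_top]
    calc (Nat.descFactorial (2 * m) (ℓ + 1) : ℚ)
        = (((2 * m : ℕ) : ℚ) - ℓ) * Nat.descFactorial (2 * m) ℓ := df_cast _ _
      _ = ∑ k ∈ Finset.range (ℓ + 1),
            (2 * (hc ℓ k * f (ℓ + 1 - k)) + ((ℓ : ℚ) - 2 * k) * (hc ℓ k * f (ℓ - k))) := by
          rw [ih, Finset.mul_sum]
          refine Finset.sum_congr rfl fun k hk => ?_
          have hkℓ : k ≤ ℓ := Nat.lt_succ_iff.mp (Finset.mem_range.mp hk)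
          have h1 : ℓ + 1 - k = (ℓ - k) + 1 := by omega
          simp only [hf]
          rw [h1, df_cast m (ℓ - k), Nat.cast_sub hkℓ]
          push_cast
          ring
      _ = 2 * ∑ k ∈ Finset.range (ℓ + 1), hc ℓ k * f (ℓ + 1 - k)
            + ∑ k ∈ Finset.range (ℓ + 1), ((ℓ : ℚ) - 2 * k) * (hc ℓ k * f (ℓ - k)) := by
          rw [Finset.sum_add_distrib, Finset.mul_sum]
      _ = ∑ k ∈ Finset.range (ℓ + 1),
            (2 * hc ℓ (k + 1) + ((ℓ : ℚ) - 2 * k) * hc ℓ k) * f (ℓ - k)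
            + 2 ^ (ℓ + 1) * f (ℓ + 1) := by
          rw [hB, hc_zero]
          simp only [add_mul, mul_assoc]
          rw [Finset.sum_add_distrib, mul_add, Finset.mul_sum]
          ring
      _ = ∑ k ∈ Finset.range (ℓ + 1 + 1), hc (ℓ + 1) k * f (ℓ + 1 - k) := by
          rw [Finset.sum_range_succ' (fun k => hc (ℓ + 1) k * f (ℓ + 1 - k)) (ℓ + 1)]
          simp only [Nat.succ_sub_succ, Nat.sub_zero, hc_rec, hc_zero]

/-- `(2m)^{\underline{ℓ}} = Σ_{k=0}^{⌊ℓ/2⌋} (ℓ!/(k!(ℓ−2k)!)) · 2^{ℓ−2k} · m^{\underline{ℓ−k}}`,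
the concrete form of the expansion of a falling factorial of `2m` in terms of the
generalized factorial coefficients with parameter 2 (`C(ℓ,ℓ−k;2) = 2^{ℓ−k} H(ℓ,k)`). -/
theorem descFactorial_two_mul (m ℓ : ℕ) :
    (Nat.descFactorial (2 * m) ℓ : ℚ) =
      ∑ k ∈ Finset.range (ℓ / 2 + 1),
        (Nat.factorial ℓ : ℚ) / (Nat.factorial k * Nat.factorial (ℓ - 2 * k)) *
          2 ^ (ℓ - 2 * k) * (Nat.descFactorial m (ℓ - k) : ℚ) := by
  have hsub : Finset.range (ℓ / 2 + 1) ⊆ Finset.range (ℓ + 1) :=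
    Finset.range_subset_range.2 (by omega)
  have h0 : ∀ k ∈ Finset.range (ℓ + 1), k ∉ Finset.range (ℓ / 2 + 1) →
      hc ℓ k * (Nat.descFactorial m (ℓ - k) : ℚ) = 0 := by
    intro k hk hk'
    simp only [Finset.mem_range] at hk hk'
    rw [hc_big (by omega), zero_mul]
  rw [key, ← Finset.sum_subset hsub h0]
  refine Finset.sum_congr rfl fun k hk => ?_
  simp only [Finset.mem_range] at hk
  have h2 : 2 * k ≤ ℓ := by omega
  simp only [hc, if_pos h2]
end
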